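/- Let M₁, M₂ be closed subspaces of a Hilbert space H with M₁ + M₂ closed, and let M = M₁ ∩ M₂. Then for every x ∈ H the iterates (P_{M₂}P_{M₁})ⁿ(x) converge to P_M(x) linearly with rate c(M₁,M₂)², i.e. ‖(P_{M₂}P_{M₁})ⁿ(x) − P_M(x)‖ ≤ c·αⁿ‖x‖ for some c and α = c(M₁,M₂)² < 1. -/

import Mathlib

/-
Put `M = M₁ ⊓ M₂` and `Nᵢ = Mᵢ ⊓ Mᗮ`, so that `P_{Nᵢ} = P_{Mᵢ} - P_M` and `c(M₁, M₂)` is exactly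
`‖P_{N₂} P_{N₁}‖`. Since `P_M` is absorbed by both `P_{Mᵢ}`, `(P_{M₂} P_{M₁})ⁿ⁺¹ - P_M` equals
`(P_{N₂} P_{N₁})ⁿ⁺¹`, and for projections `e`, `f` in a C*-algebra `(fe)ⁿ⁺² = (fe)ⁿ⁺¹ (fe)⋆(fe)`
gives `‖(fe)ⁿ⁺¹‖ ≤ ‖fe‖^(2n+1)`: this is the rate `c²`.
For `c < 1`: `N₁ ⊓ N₂ = 0` and `N₁ + N₂ = (M₁ + M₂) ⊓ Mᗮ` is closed, so by the open mapping
theorem `δ‖u‖ ≤ ‖u + v‖` on `N₁ × N₂` for some `δ > 0`. Taking `v = -P_{N₂} u` and using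
Pythagoras, `‖P_{N₂} u‖² ≤ (1 - δ²)‖u‖²` on `N₁`.
-/

open scoped InnerProductSpace

noncomputable def proj {𝕜 H : Type*} [RCLike 𝕜] [NormedAddCommGroup H]
    [InnerProductSpace 𝕜 H] (S : Submodule 𝕜 H) [CompleteSpace S] : H →L[𝕜] H :=
  S.subtypeL.comp S.orthogonalProjectionOnto

noncomputable def fcos {𝕜 H : Type*} [RCLike 𝕜] [NormedAddCommGroup H]
    [InnerProductSpace 𝕜 H] (M₁ M₂ : Submodule 𝕜 H) : ℝ :=
  sSup {r : ℝ | ∃ x ∈ M₁ ⊓ (M₁ ⊓ M₂)ᗮ, ∃ y ∈ M₂ ⊓ (M₁ ⊓ M₂)ᗮ,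
    ‖x‖ ≤ 1 ∧ ‖y‖ ≤ 1 ∧ r = ‖(⟪x, y⟫_𝕜 : 𝕜)‖}

theorem sub_pow_succ_of_mul_eq {R : Type*} [Ring R] {p q : R} (hp : IsIdempotentElem p)
    (hqp : q * p = p) (hpq : p * q = p) (n : ℕ) : (q - p) ^ (n + 1) = q ^ (n + 1) - p := by
  have hpow : ∀ k, q ^ k * p = p := fun k => by
    induction k with
    | zero => rw [pow_zero, one_mul]
    | succ k ih => rw [pow_succ', mul_assoc, ih, hqp]
  induction n with
  | zero => rw [zero_add, pow_one, pow_one]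
  | succ n ih =>
    rw [pow_succ, ih, sub_mul, mul_sub, mul_sub, ← pow_succ, hpow, hpq, hp.eq]
    abel

theorem IsStarProjection.mul_eq_right_of_mul_eq_left {R : Type*} [Mul R] [StarMul R] {p q : R}
    (hp : IsStarProjection p) (hq : IsStarProjection q) (h : p * q = p) : q * p = p := by
  simpa [hp.isSelfAdjoint.star_eq, hq.isSelfAdjoint.star_eq] using congr(star $(h))

section CStarRing

variable {R : Type*} [NormedRing R] [StarRing R] [CStarRing R]

theorem IsStarProjection.norm_mul_pow_succ_le {e f : R} (he : IsStarProjection e)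
    (hf : IsStarProjection f) (n : ℕ) : ‖(f * e) ^ (n + 1)‖ ≤ ‖f * e‖ ^ (2 * n + 1) := by
  induction n with
  | zero => rw [zero_add, pow_one, mul_zero, zero_add, pow_one]
  | succ n ih =>
    have hE : (f * e) ^ (n + 1) * e = (f * e) ^ (n + 1) := by
      rw [pow_succ, mul_assoc, mul_assoc, he.isIdempotentElem.eq]
    have hstep : (f * e) ^ (n + 1 + 1) = (f * e) ^ (n + 1) * (star (f * e) * (f * e)) := by
      rw [star_mul, he.isSelfAdjoint.star_eq, hf.isSelfAdjoint.star_eq,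
        show (f * e) ^ (n + 1) * (e * f * (f * e)) = (f * e) ^ (n + 1) * e * (f * f) * e by
          simp only [mul_assoc],
        hE, hf.isIdempotentElem.eq, mul_assoc, ← pow_succ]
    calc ‖(f * e) ^ (n + 1 + 1)‖ ≤ ‖(f * e) ^ (n + 1)‖ * ‖star (f * e) * (f * e)‖ :=
          hstep ▸ norm_mul_le _ _
      _ ≤ ‖f * e‖ ^ (2 * n + 1) * (‖f * e‖ * ‖f * e‖) := by
          rw [CStarRing.norm_star_mul_self]; gcongr
      _ = ‖f * e‖ ^ (2 * (n + 1) + 1) := by ring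

theorem IsStarProjection.norm_mul_pow_sub_le {p q₁ q₂ : R} (hp : IsStarProjection p)
    (hq₁ : IsStarProjection q₁) (hq₂ : IsStarProjection q₂) (h₁ : p * q₁ = p) (h₂ : p * q₂ = p)
    (n : ℕ) :
    ‖(q₂ * q₁) ^ n - p‖ ≤
      max 1 ‖(q₂ - p) * (q₁ - p)‖⁻¹ * (‖(q₂ - p) * (q₁ - p)‖ ^ 2) ^ n := by
  set γ := ‖(q₂ - p) * (q₁ - p)‖
  obtain _ | n := n
  · rw [pow_zero, pow_zero, mul_one]
    exact hp.one_sub.norm_le.trans (le_max_left _ _)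
  have hq₁p : q₁ * p = p := hp.mul_eq_right_of_mul_eq_left hq₁ h₁
  have hq₂p : q₂ * p = p := hp.mul_eq_right_of_mul_eq_left hq₂ h₂
  have hdecomp : q₂ * q₁ - p = (q₂ - p) * (q₁ - p) := by
    rw [sub_mul, mul_sub, mul_sub, hq₂p, h₁, hp.isIdempotentElem.eq]
    abel
  have hγ : γ ^ (2 * n + 1) ≤ max 1 γ⁻¹ * (γ ^ 2) ^ (n + 1) := by
    have hγ0 : 0 ≤ γ := norm_nonneg _
    rcases hγ0.eq_or_lt with h0 | hpos
    · rw [← h0]; simp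
    calc γ ^ (2 * n + 1) = γ⁻¹ * (γ ^ 2) ^ (n + 1) := by field_simp; ring
      _ ≤ max 1 γ⁻¹ * (γ ^ 2) ^ (n + 1) := by gcongr; exact le_max_right _ _
  rw [← sub_pow_succ_of_mul_eq hp.isIdempotentElem (by rw [mul_assoc, hq₁p, hq₂p])
    (by rw [← mul_assoc, h₂, h₁]), hdecomp]
  exact ((hp.sub_of_mul_eq_left hq₁ h₁).norm_mul_pow_succ_le
    (hp.sub_of_mul_eq_left hq₂ h₂) n).trans hγ

end CStarRing

theorem Submodule.exists_pos_mul_norm_le_norm_add {𝕜 E : Type*} [NontriviallyNormedField 𝕜]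
    [NormedAddCommGroup E] [NormedSpace 𝕜 E] [CompleteSpace E] {K L : Submodule 𝕜 E}
    [CompleteSpace K] [CompleteSpace L] (hKL : Disjoint K L)
    (hsup : IsClosed ((K ⊔ L : Submodule 𝕜 E) : Set E)) :
    ∃ c > 0, ∀ u ∈ K, ∀ v ∈ L, c * ‖u‖ ≤ ‖u + v‖ := by
  set f := K.subtypeL.coprod L.subtypeL
  have hinj : Function.Injective f := by
    refine (injective_iff_map_eq_zero f).2 fun ⟨u, v⟩ huv => ?_
    replace huv : (u : E) + v = 0 := huv
    have hu : (u : E) = -v := eq_neg_of_add_eq_zero_left huv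
    have hu0 : (u : E) = 0 := hKL.le_bot ⟨u.2, hu ▸ L.neg_mem v.2⟩
    have hv0 : (v : E) = 0 := by simpa [hu0] using huv
    ext <;> simp [hu0, hv0]
  have hrange : Set.range f = (K ⊔ L : Submodule 𝕜 E) := by
    ext w
    simp [f, Submodule.mem_sup, eq_comm]
  obtain ⟨c, hc, hf⟩ := antilipschitzWith_iff_exists_mul_le_norm.1
    (f.antilipschitz_of_injective_of_isClosed_range hinj (hrange ▸ hsup))
  refine ⟨c, hc, fun u hu v hv => ?_⟩
  calc c * ‖u‖ ≤ c * ‖((⟨u, hu⟩, ⟨v, hv⟩) : K × L)‖ := by gcongr; exact le_max_left _ _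
    _ ≤ ‖u + v‖ := hf _

namespace Submodule

variable {𝕜 H : Type*} [RCLike 𝕜] [NormedAddCommGroup H] [InnerProductSpace 𝕜 H]

instance completeSpace_inf_orthogonal [CompleteSpace H] (V U : Submodule 𝕜 H) [CompleteSpace V] :
    CompleteSpace (V ⊓ Uᗮ : Submodule 𝕜 H) := by
  have hV : IsClosed (V : Set H) := (completeSpace_coe_iff_isComplete.mp ‹_›).isClosed
  exact (hV.inter U.isClosed_orthogonal).completeSpace_coe

theorem starProjection_inf_orthogonal {U V : Submodule 𝕜 H} [U.HasOrthogonalProjection]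
    [V.HasOrthogonalProjection] [(V ⊓ Uᗮ).HasOrthogonalProjection] (h : U ≤ V) :
    (V ⊓ Uᗮ).starProjection = V.starProjection - U.starProjection := by
  ext x
  refine eq_starProjection_of_mem_of_inner_eq_zero ⟨?_, ?_⟩ fun w hw => ?_
  · exact V.sub_mem (V.starProjection_apply_mem x) (h (U.starProjection_apply_mem x))
  · rw [sub_apply, ← sub_sub_sub_cancel_left _ _ x]
    exact Uᗮ.sub_mem (U.sub_starProjection_mem_orthogonal x)
      (orthogonal_le h (V.sub_starProjection_mem_orthogonal x))
  · rw [sub_apply, sub_sub_eq_add_sub, add_sub_right_comm, inner_add_left,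
      starProjection_inner_eq_zero x w hw.1,
      inner_right_of_mem_orthogonal (U.starProjection_apply_mem x) hw.2, add_zero]

theorem map_starProjection_orthogonal {U V : Submodule 𝕜 H} [U.HasOrthogonalProjection]
    (h : U ≤ V) : V.map (Uᗮ.starProjection : H →ₗ[𝕜] H) = V ⊓ Uᗮ := by
  ext x
  constructor
  · rintro ⟨y, hy, rfl⟩
    refine ⟨?_, Uᗮ.starProjection_apply_mem y⟩
    rw [ContinuousLinearMap.coe_coe, starProjection_orthogonal_val]
    exact V.sub_mem hy (h (U.starProjection_apply_mem y))
  · rintro ⟨hxV, hxU⟩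
    exact ⟨x, hxV, starProjection_eq_self_iff.2 hxU⟩

theorem inf_orthogonal_sup_inf_orthogonal {U V₁ V₂ : Submodule 𝕜 H} [U.HasOrthogonalProjection]
    (h₁ : U ≤ V₁) (h₂ : U ≤ V₂) : V₁ ⊓ Uᗮ ⊔ V₂ ⊓ Uᗮ = (V₁ ⊔ V₂) ⊓ Uᗮ := by
  rw [← map_starProjection_orthogonal h₁, ← map_starProjection_orthogonal h₂, ← map_sup,
    map_starProjection_orthogonal (h₁.trans le_sup_left)]

theorem sSup_norm_inner_eq_norm_starProjection_mul (K L : Submodule 𝕜 H)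
    [K.HasOrthogonalProjection] [L.HasOrthogonalProjection] :
    sSup {r : ℝ | ∃ x ∈ K, ∃ y ∈ L, ‖x‖ ≤ 1 ∧ ‖y‖ ≤ 1 ∧ r = ‖⟪x, y⟫_𝕜‖} =
      ‖L.starProjection * K.starProjection‖ := by
  set T := L.starProjection * K.starProjection
  set S := {r : ℝ | ∃ x ∈ K, ∃ y ∈ L, ‖x‖ ≤ 1 ∧ ‖y‖ ≤ 1 ∧ r = ‖⟪x, y⟫_𝕜‖}
  have hle : ∀ r ∈ S, r ≤ ‖T‖ := by
    rintro _ ⟨x, hx, y, hy, hx1, hy1, rfl⟩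
    have hTx : ⟪x, y⟫_𝕜 = ⟪T x, y⟫_𝕜 := by
      rw [mul_apply_eq_comp, starProjection_eq_self_iff.2 hx,
        inner_starProjection_left_eq_right, starProjection_eq_self_iff.2 hy]
    calc ‖⟪x, y⟫_𝕜‖ ≤ ‖T x‖ * ‖y‖ := hTx ▸ norm_inner_le_norm _ _
      _ ≤ ‖T‖ * ‖x‖ * 1 := by gcongr; exact T.le_opNorm x
      _ ≤ ‖T‖ := by nlinarith [norm_nonneg T, norm_nonneg x]
  have hzero : (0 : ℝ) ∈ S := ⟨0, K.zero_mem, 0, L.zero_mem, by simp, by simp, by simp⟩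
  have hbdd : BddAbove S := ⟨‖T‖, hle⟩
  refine le_antisymm (csSup_le ⟨0, hzero⟩ hle) ?_
  refine ContinuousLinearMap.opNorm_le_of_unit_norm (le_csSup hbdd hzero) fun x hx => ?_
  set u := K.starProjection x
  set w := L.starProjection u
  have hu : ‖u‖ ≤ 1 := hx ▸ K.norm_starProjection_apply_le x
  change ‖w‖ ≤ sSup S
  rcases eq_or_ne w 0 with hw | hw
  · rw [hw, norm_zero]; exact le_csSup hbdd hzero
  set y : H := (‖w‖⁻¹ : 𝕜) • w
  have hy : ‖y‖ = 1 := norm_smul_inv_norm hw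
  have hwy : ‖w‖ = RCLike.re ⟪y, u⟫_𝕜 := by
    rw [inner_smul_left, map_inv₀, RCLike.conj_ofReal, ← RCLike.ofReal_inv, RCLike.re_ofReal_mul,
      re_inner_starProjection_eq_normSq]
    field_simp
    rfl
  calc ‖w‖ = RCLike.re ⟪y, u⟫_𝕜 := hwy
    _ ≤ ‖⟪y, u⟫_𝕜‖ := RCLike.re_le_norm _
    _ = ‖⟪u, y⟫_𝕜‖ := norm_inner_symm _ _
    _ ≤ sSup S := le_csSup hbdd
        ⟨u, K.starProjection_apply_mem x, y, L.smul_mem _ (L.starProjection_apply_mem u),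
          hu, hy.le, rfl⟩

theorem norm_starProjection_mul_lt_one [CompleteSpace H] {K L : Submodule 𝕜 H}
    [CompleteSpace K] [CompleteSpace L] (hKL : Disjoint K L)
    (hsup : IsClosed ((K ⊔ L : Submodule 𝕜 H) : Set H)) :
    ‖L.starProjection * K.starProjection‖ < 1 := by
  obtain ⟨c, hc, hcK⟩ := exists_pos_mul_norm_le_norm_add hKL hsup
  have hK : ∀ u ∈ K, ‖L.starProjection u‖ ≤ √(1 - c ^ 2) * ‖u‖ := by
    intro u hu
    have hdist : c * ‖u‖ ≤ ‖Lᗮ.starProjection u‖ := by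
      simpa [starProjection_orthogonal_val, sub_eq_add_neg] using
        hcK u hu _ (L.neg_mem (L.starProjection_apply_mem u))
    have hpyth := L.norm_sq_eq_add_norm_sq_starProjection u
    calc ‖L.starProjection u‖ ≤ √((1 - c ^ 2) * ‖u‖ ^ 2) :=
          Real.le_sqrt_of_sq_le (by nlinarith [mul_self_le_mul_self (by positivity) hdist])
      _ = √(1 - c ^ 2) * ‖u‖ := by rw [Real.sqrt_mul' _ (sq_nonneg _), Real.sqrt_sq (norm_nonneg _)]
  have hsqrt : √(1 - c ^ 2) < 1 := (Real.sqrt_lt' one_pos).2 (by nlinarith)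
  refine (ContinuousLinearMap.opNorm_le_bound _ (Real.sqrt_nonneg _) fun x => ?_).trans_lt hsqrt
  calc ‖L.starProjection (K.starProjection x)‖ ≤ √(1 - c ^ 2) * ‖K.starProjection x‖ :=
        hK _ (K.starProjection_apply_mem x)
    _ ≤ √(1 - c ^ 2) * ‖x‖ := by gcongr; exact K.norm_starProjection_apply_le x

theorem disjoint_inf_orthogonal_inf (M₁ M₂ : Submodule 𝕜 H) :
    Disjoint (M₁ ⊓ (M₁ ⊓ M₂)ᗮ) (M₂ ⊓ (M₁ ⊓ M₂)ᗮ) :=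
  disjoint_iff_inf_le.2 fun _ ⟨⟨h₁, ho⟩, h₂, _⟩ =>
    (M₁ ⊓ M₂).inf_orthogonal_eq_bot.le ⟨⟨h₁, h₂⟩, ho⟩

end Submodule

theorem proj_eq_starProjection {𝕜 H : Type*} [RCLike 𝕜] [NormedAddCommGroup H]
    [InnerProductSpace 𝕜 H] (S : Submodule 𝕜 H) [CompleteSpace S] :
    proj S = S.starProjection :=
  rfl

/-- If `M₁ + M₂` is closed, the alternating projections converge linearly with
rate `c(M₁,M₂)²`. -/
theorem alternating_projections_linear_convergence {𝕜 H : Type*} [RCLike 𝕜]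
    [NormedAddCommGroup H] [InnerProductSpace 𝕜 H] [CompleteSpace H]
    (M₁ M₂ : Submodule 𝕜 H)
    [CompleteSpace M₁] [CompleteSpace M₂] [CompleteSpace (M₁ ⊓ M₂ : Submodule 𝕜 H)]
    (hsum : IsClosed ((M₁ ⊔ M₂ : Submodule 𝕜 H) : Set H)) :
    fcos M₁ M₂ ^ 2 < 1 ∧
      ∃ c : ℝ, ∀ x : H, ∀ n : ℕ,
        ‖(((proj M₂).comp (proj M₁)) ^ n) x - proj (M₁ ⊓ M₂) x‖
          ≤ c * (fcos M₁ M₂ ^ 2) ^ n * ‖x‖ := by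
  set M := M₁ ⊓ M₂
  have hfcos : fcos M₁ M₂ = ‖(M₂ ⊓ Mᗮ).starProjection * (M₁ ⊓ Mᗮ).starProjection‖ :=
    Submodule.sSup_norm_inner_eq_norm_starProjection_mul _ _
  have hlt : fcos M₁ M₂ < 1 := by
    refine hfcos ▸ Submodule.norm_starProjection_mul_lt_one
      (Submodule.disjoint_inf_orthogonal_inf M₁ M₂) ?_
    rw [Submodule.inf_orthogonal_sup_inf_orthogonal inf_le_left inf_le_right, Submodule.coe_inf]
    exact hsum.inter M.isClosed_orthogonal
  rw [Submodule.starProjection_inf_orthogonal inf_le_left,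
    Submodule.starProjection_inf_orthogonal inf_le_right] at hfcos
  refine ⟨pow_lt_one₀ (hfcos ▸ norm_nonneg _) hlt two_ne_zero, max 1 (fcos M₁ M₂)⁻¹,
    fun x n => ?_⟩
  simp only [proj_eq_starProjection, ← ContinuousLinearMap.mul_def]
  calc ‖((M₂.starProjection * M₁.starProjection) ^ n) x - M.starProjection x‖
      = ‖((M₂.starProjection * M₁.starProjection) ^ n - M.starProjection) x‖ := by
        rw [sub_apply]
    _ ≤ ‖(M₂.starProjection * M₁.starProjection) ^ n - M.starProjection‖ * ‖x‖ :=
        ContinuousLinearMap.le_opNorm _ x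
    _ ≤ _ := by
        rw [hfcos]
        gcongr
        exact isStarProjection_starProjection.norm_mul_pow_sub_le isStarProjection_starProjection
          isStarProjection_starProjection
          (Submodule.starProjection_comp_starProjection_of_le inf_le_left)
          (Submodule.starProjection_comp_starProjection_of_le inf_le_right) n
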